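/- arXiv:1507.07604 — 2 statements merged into one kernel-verified Lean document; each statement's English description precedes it below -/
import Mathlib

section
/- Let Γ be a finite group acting effectively and algebraically on an affine algebraic variety X, and let σ be a Γ-invariant locally nilpotent vector field on X. Then for a general point x ∈ X and every pair of vectors u, v ∈ T_xX such that u, v and the value σ(x) are linearly independent, there exists a Γ-invariant regular function f on X with f(x) = 0, df(u) = 0 and df(v) ≠ 0. -/
/-!
STATEMENT 2 (Lemma `Gam`): Let Γ be a finite group acting effectively and algebraically
on an affine algebraic variety X, and let σ be a Γ-invariant locally nilpotent vector
field on X.  Then for a general point x ∈ X (i.e. outside a suitable proper closed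
subvariety, here: outside the zero set of some nonzero regular function h) and every pair
of vectors u, v ∈ T_xX such that u, v and σ(x) are linearly independent, there exists a
Γ-invariant regular function f on X with f(x) = 0, df(u) = 0 and df(v) ≠ 0.

Modelling conventions: X is given by its coordinate ring `A` (finitely generated,
integral, smooth -- the blanket assumption of the paper); points are ℂ-algebra
homomorphisms `A →ₐ[ℂ] ℂ`; a tangent vector at a point p is a point derivation
`u : A →ₗ[ℂ] ℂ` (so `df(u) = u f`); a vector field is a ℂ-derivation of A, it is locally
nilpotent iff it acts locally nilpotently on A (equivalently generates an algebraic
ℂ₊-action); Γ acts by algebra automorphisms, effectively = faithfully.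
-/

noncomputable section

/-- Locally nilpotent vector field (locally nilpotent derivation of `ℂ[X]`). -/
def IsLND {A : Type*} [CommRing A] [Algebra ℂ A] (ξ : Derivation ℂ A A) : Prop :=
  ∀ a : A, ∃ N : ℕ, (ξ.toLinearMap ^ N) a = 0

/-- A tangent vector of `X` at the point `p`: a point derivation at `p`. -/
def IsPointDerivation {A : Type*} [CommRing A] [Algebra ℂ A] (p : A →ₐ[ℂ] ℂ)
    (u : A →ₗ[ℂ] ℂ) : Prop :=
  ∀ a b : A, u (a * b) = p a * u b + p b * u a

/-- The value of the vector field ξ at the point p, as a tangent vector at p. -/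
def fieldAt {A : Type*} [CommRing A] [Algebra ℂ A] (p : A →ₐ[ℂ] ℂ)
    (ξ : Derivation ℂ A A) : A →ₗ[ℂ] ℂ :=
  p.toLinearMap.comp ξ.toLinearMap

/-!
Effectiveness gives, for each `γ ≠ 1`, a function `a_γ` moved by `γ`; off the zero set of
`h = ∏_{γ ≠ 1} (γ a_γ - a_γ)` the point `x` is not fixed by any `γ ≠ 1`. Then the maximal
ideal `𝔪` of `x` is coprime to `J = ⋂_{γ ≠ 1} (γ 𝔪)²`, so `𝔪 ∩ J` surjects onto `𝔪/𝔪²`, and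
since `u, v` are independent on `𝔪/𝔪²` some `a ∈ 𝔪 ∩ J` has `u a = 0 ≠ v a`. Every term but
`a` of the orbit sum `f = ∑_γ γ a` vanishes to second order at `x`, so `f` is the required
invariant function.
-/

section PointDerivation

variable {A : Type*} [CommRing A] [Algebra ℂ A] {p : A →ₐ[ℂ] ℂ} {u v w : A →ₗ[ℂ] ℂ}

namespace IsPointDerivation

lemma map_one (hu : IsPointDerivation p u) : u 1 = 0 := by
  have := hu 1 1
  simp only [mul_one, _root_.map_one, one_mul] at this
  linear_combination -this

lemma map_algebraMap (hu : IsPointDerivation p u) (c : ℂ) : u (algebraMap ℂ A c) = 0 := by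
  rw [Algebra.algebraMap_eq_smul_one, map_smul, hu.map_one, smul_zero]

lemma map_eq_zero_of_mem_ker_sq (hu : IsPointDerivation p u) {a : A}
    (ha : a ∈ RingHom.ker p ^ 2) : u a = 0 := by
  rw [sq] at ha
  refine Submodule.mul_induction_on ha (fun m hm n hn ↦ ?_) fun x y hx hy ↦ ?_
  · rw [hu m n, RingHom.mem_ker.mp hm, RingHom.mem_ker.mp hn]
    ring
  · rw [map_add, hx, hy, add_zero]

lemma sub (hu : IsPointDerivation p u) (hv : IsPointDerivation p v) :
    IsPointDerivation p (u - v) := by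
  intro a b
  simp only [LinearMap.sub_apply, hu a b, hv a b]
  ring

lemma smul (hu : IsPointDerivation p u) (c : ℂ) : IsPointDerivation p (c • u) := by
  intro a b
  simp only [LinearMap.smul_apply, smul_eq_mul, hu a b]
  ring

lemma comp_algEquiv (hu : IsPointDerivation p u) (e : A ≃ₐ[ℂ] A) :
    IsPointDerivation (p.comp (e : A →ₐ[ℂ] A)) (u ∘ₗ e.toLinearMap) := by
  intro a b
  simp only [LinearMap.comp_apply, AlgEquiv.toLinearMap_apply, AlgHom.comp_apply,
    _root_.map_mul]
  exact hu _ _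

/-- Writing `1 = n + j` with `n ∈ 𝔪²`, `j ∈ J`, every `x ∈ 𝔪` is `x j + x n ∈ (𝔪 ⊓ J) + 𝔪²`. -/
lemma eq_zero_of_forall_mem_inf {J : Ideal A} (hJ : IsCoprime (RingHom.ker p ^ 2) J)
    (hw : IsPointDerivation p w) (h : ∀ a ∈ RingHom.ker p ⊓ J, w a = 0) : w = 0 := by
  obtain ⟨n, hn, j, hj, hnj⟩ := Ideal.isCoprime_iff_exists.mp hJ
  ext x
  set y := x - algebraMap ℂ A (p x)
  have hy : y ∈ RingHom.ker p := by simp [y, RingHom.mem_ker]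
  have hx : x = y * j + y * n + algebraMap ℂ A (p x) := by
    rw [← mul_add, add_comm j n, hnj, mul_one, sub_add_cancel]
  rw [hx, map_add, map_add, hw.map_algebraMap, hw.map_eq_zero_of_mem_ker_sq
    (Ideal.mul_mem_left _ _ hn), h _ ⟨Ideal.mul_mem_right _ _ hy, Ideal.mul_mem_left _ _ hj⟩]
  simp

lemma exists_mem_inf_apply_eq_zero_apply_ne_zero {J : Ideal A}
    (hJ : IsCoprime (RingHom.ker p ^ 2) J) (hu : IsPointDerivation p u)
    (hv : IsPointDerivation p v) (huv : LinearIndependent ℂ ![u, v]) :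
    ∃ a ∈ RingHom.ker p ⊓ J, u a = 0 ∧ v a ≠ 0 := by
  by_contra! hker
  let W := (RingHom.ker p ⊓ J).restrictScalars ℂ
  have hle : LinearMap.ker (u ∘ₗ W.subtype) ≤ LinearMap.ker (v ∘ₗ W.subtype) :=
    fun a ha ↦ hker a a.2 ha
  obtain ⟨c, hc⟩ : ∃ c : ℂ, c • (u ∘ₗ W.subtype) = v ∘ₗ W.subtype := by
    have := mem_span_of_iInf_ker_le_ker (ι := Unit) (L := fun _ ↦ u ∘ₗ W.subtype)
      (by simpa using hle)
    rwa [Set.range_const, Submodule.mem_span_singleton] at this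
  have hvu : v - c • u = 0 := (hv.sub (hu.smul c)).eq_zero_of_forall_mem_inf hJ
    fun a ha ↦ by simpa [sub_eq_zero] using (LinearMap.congr_fun hc ⟨a, ha⟩).symm
  have := (LinearIndependent.pair_iff.mp huv c (-1)
    (by rw [show c • u + (-1 : ℂ) • v = -(v - c • u) by module, hvu, neg_zero])).2
  norm_num at this

end IsPointDerivation

end PointDerivation

lemma AlgHom.isCoprime_ker_of_ne {K A : Type*} [Field K] [CommRing A] [Algebra K A]
    {p q : A →ₐ[K] K} (hpq : p ≠ q) : IsCoprime (RingHom.ker p) (RingHom.ker q) := by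
  obtain ⟨a, ha⟩ := DFunLike.ne_iff.mp hpq
  have hc : p a - q a ≠ 0 := sub_ne_zero.mpr ha
  refine Ideal.isCoprime_iff_exists.mpr
    ⟨-algebraMap K A (p a - q a)⁻¹ * (a - algebraMap K A (p a)), ?_,
      algebraMap K A (p a - q a)⁻¹ * (a - algebraMap K A (q a)), ?_, ?_⟩
  · simp [RingHom.mem_ker]
  · simp [RingHom.mem_ker]
  · rw [neg_mul, neg_add_eq_sub, ← mul_sub, sub_sub_sub_cancel_left, ← map_sub, ← map_mul,
      inv_mul_cancel₀ hc, map_one]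

section FiniteGroupAction

variable {R A : Type*} [CommRing R] [CommRing A] [Algebra R A] {Γ : Type*} [Group Γ]
  (ρ : Γ →* (A ≃ₐ[R] A))

lemma exists_ne_zero_forall_comp_ne [IsDomain A] [Finite Γ] (hρ : Function.Injective ρ)
    {B : Type*} [CommRing B] [Algebra R B] :
    ∃ h : A, h ≠ 0 ∧ ∀ p : A →ₐ[R] B, p h ≠ 0 → ∀ γ ≠ 1, p.comp (ρ γ : A →ₐ[R] A) ≠ p := by
  classical
  have := Fintype.ofFinite Γ
  have hmoved (γ : {γ : Γ // γ ≠ 1}) : ∃ a : A, ρ γ a ≠ a := by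
    by_contra! h
    exact γ.2 (hρ (by ext b; simpa using h b))
  choose a ha using hmoved
  refine ⟨∏ γ, (ρ γ.1 (a γ) - a γ), Finset.prod_ne_zero_iff.mpr fun γ _ ↦ sub_ne_zero.mpr (ha γ),
    fun p hp γ hγ hpγ ↦ hp ?_⟩
  rw [map_prod]
  refine Finset.prod_eq_zero (Finset.mem_univ ⟨γ, hγ⟩) ?_
  rw [map_sub, sub_eq_zero]
  exact congr($hpγ (a ⟨γ, hγ⟩))

variable [Fintype Γ]

lemma sum_orbit_invariant (a : A) (δ : Γ) : ρ δ (∑ γ, ρ γ a) = ∑ γ, ρ γ a := by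
  rw [map_sum]
  exact Fintype.sum_equiv (Equiv.mulLeft δ) _ _ fun γ ↦ by simp

lemma apply_sum_orbit_of_forall_ne_one {M F : Type*} [AddCommMonoid M] [FunLike F A M]
    [AddMonoidHomClass F A M] (ℓ : F) {a : A} (h : ∀ γ ≠ 1, ℓ (ρ γ a) = 0) :
    ℓ (∑ γ, ρ γ a) = ℓ a := by
  rw [map_sum, Finset.sum_eq_single_of_mem 1 (Finset.mem_univ 1) fun γ _ hγ ↦ h γ hγ]
  simp

end FiniteGroupAction

lemma exists_invariant_of_forall_comp_ne {A : Type*} [CommRing A] [Algebra ℂ A] {Γ : Type*}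
    [Group Γ] [Fintype Γ] (ρ : Γ →* (A ≃ₐ[ℂ] A)) {p : A →ₐ[ℂ] ℂ}
    (hp : ∀ γ ≠ 1, p.comp (ρ γ : A →ₐ[ℂ] A) ≠ p) {u v : A →ₗ[ℂ] ℂ}
    (hu : IsPointDerivation p u) (hv : IsPointDerivation p v)
    (huv : LinearIndependent ℂ ![u, v]) :
    ∃ f : A, (∀ γ, ρ γ f = f) ∧ p f = 0 ∧ u f = 0 ∧ v f ≠ 0 := by
  classical
  let q (γ : Γ) := p.comp (ρ γ : A →ₐ[ℂ] A)
  let J := ⨅ γ ∈ Finset.univ.erase 1, RingHom.ker (q γ) ^ 2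
  have hJ : IsCoprime (RingHom.ker p ^ 2) J := Ideal.isCoprime_biInf fun γ hγ ↦
    (AlgHom.isCoprime_ker_of_ne (hp γ (Finset.ne_of_mem_erase hγ)).symm).pow
  have hJ_le (γ : Γ) (hγ : γ ≠ 1) : J ≤ RingHom.ker (q γ) ^ 2 :=
    biInf_le _ (Finset.mem_erase.mpr ⟨hγ, Finset.mem_univ γ⟩)
  obtain ⟨a, ⟨hpa, haJ⟩, hua, hva⟩ := hu.exists_mem_inf_apply_eq_zero_apply_ne_zero hJ hv huv
  have hderiv {w : A →ₗ[ℂ] ℂ} (hw : IsPointDerivation p w) (γ : Γ) (hγ : γ ≠ 1) :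
      w (ρ γ a) = 0 :=
    (hw.comp_algEquiv (ρ γ)).map_eq_zero_of_mem_ker_sq (hJ_le γ hγ haJ)
  have hpoint (γ : Γ) (hγ : γ ≠ 1) : p (ρ γ a) = 0 := by
    simpa [q] using RingHom.mem_ker.mp (Ideal.pow_le_self two_ne_zero (hJ_le γ hγ haJ))
  refine ⟨∑ γ, ρ γ a, sum_orbit_invariant ρ a, ?_, ?_, ?_⟩
  · rwa [apply_sum_orbit_of_forall_ne_one ρ p hpoint]
  · rwa [apply_sum_orbit_of_forall_ne_one ρ u (hderiv hu)]
  · rwa [apply_sum_orbit_of_forall_ne_one ρ v (hderiv hv)]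

theorem statement2_general (A : Type) [CommRing A] [IsDomain A] [Algebra ℂ A]
    (Γ : Type) [Group Γ] [Finite Γ] (actΓ : Γ →* (A ≃ₐ[ℂ] A))
    (heff : Function.Injective actΓ)
    (σ : Derivation ℂ A A) :
    ∃ h : A, h ≠ 0 ∧
      ∀ p : A →ₐ[ℂ] ℂ, p h ≠ 0 →
        ∀ u v : A →ₗ[ℂ] ℂ, IsPointDerivation p u → IsPointDerivation p v →
          LinearIndependent ℂ ![u, v, fieldAt p σ] →
          ∃ f : A, (∀ γ : Γ, actΓ γ f = f) ∧ p f = 0 ∧ u f = 0 ∧ v f ≠ 0 := by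
  have := Fintype.ofFinite Γ
  obtain ⟨h, hh, hfree⟩ := exists_ne_zero_forall_comp_ne actΓ heff (B := ℂ)
  refine ⟨h, hh, fun p hp u v hu hv huvσ ↦
    exists_invariant_of_forall_comp_ne actΓ (hfree p hp) hu hv ?_⟩
  have hpair : ![u, v, fieldAt p σ] ∘ Fin.castSucc = ![u, v] := by
    ext i : 1
    fin_cases i <;> rfl
  simpa only [hpair] using huvσ.comp Fin.castSucc (Fin.castSucc_injective 2)

theorem statement2 (A : Type) [CommRing A] [IsDomain A] [Algebra ℂ A]
    (hfg : Algebra.FiniteType ℂ A) (hsmooth : Algebra.FormallySmooth ℂ A)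
    (Γ : Type) [Group Γ] [Finite Γ] (actΓ : Γ →* (A ≃ₐ[ℂ] A))
    (heff : Function.Injective actΓ)
    (σ : Derivation ℂ A A) (hσ : IsLND σ)
    (hσinv : ∀ (γ : Γ) (a : A), actΓ γ (σ a) = σ (actΓ γ a)) :
    ∃ h : A, h ≠ 0 ∧
      ∀ p : A →ₐ[ℂ] ℂ, p h ≠ 0 →
        ∀ u v : A →ₗ[ℂ] ℂ, IsPointDerivation p u → IsPointDerivation p v →
          LinearIndependent ℂ ![u, v, fieldAt p σ] →
          ∃ f : A, (∀ γ : Γ, actΓ γ f = f) ∧ p f = 0 ∧ u f = 0 ∧ v f ≠ 0 :=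
  statement2_general A Γ actΓ heff σ
end
end

section
/- Let π: X → B be a surjective morphism of smooth affine algebraic varieties (so ℂ[B] ⊆ ℂ[X]). Let η be a locally nilpotent or semi-simple vector field on X with ℂ[B] ⊆ Ker η. Let α₁, …, α_k be regular functions on B without common zeros, D_i = (α_i ∘ π)^{-1}(0), and let ξ₁, …, ξ_k be locally nilpotent vector fields on X such that α_i ∈ Ker ξ_i and the restriction of the pair (ξ_i, η) to X_i = X \ D_i is compatible. Then there exists a nonzero ideal J ⊆ ℂ[X] such that J·η ⊆ Lie_alg(X). -/
/-!
STATEMENT 12 (Theorem `ap1`): Let π : X → B be a surjective morphism of smooth affine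
algebraic varieties (so ℂ[B] ⊆ ℂ[X]).  Let η be a locally nilpotent or semi-simple vector
field on X with ℂ[B] ⊆ Ker η.  Let α₁, …, α_k be regular functions on B without common
zeros, D_i = (α_i ∘ π)⁻¹(0), and let ξ₁, …, ξ_k be locally nilpotent vector fields on X
such that α_i ∈ Ker ξ_i and the restriction of the pair (ξ_i, η) to X_i = X \ D_i is
compatible.  Then there exists a nonzero ideal J ⊆ ℂ[X] with J·η ⊆ Lie_alg(X).

Modelling conventions: X, B are given by their coordinate rings `A`, `R` (finitely
generated integral smooth ℂ-algebras) and π by the comorphism `πs : R →ₐ[ℂ] A`;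
surjectivity of π is surjectivity on ℂ-points.  Vector fields are ℂ-derivations;
`Ker ξ = {a | ξ a = 0}`.  On the principal open set X_i = {α_i ∘ π ≠ 0} the coordinate
ring is the localization at `πs (α i)`, so:
 * the pair (ξ_i, η) is semi-compatible on X_i iff there is a nonzero ideal I of ℂ[X]
   every element h of which satisfies `α_i^l · h ∈ span((Ker ξ_i)·(Ker η))` for some l
   (clearing denominators);
 * compatibility additionally requires an element `a ∈ Ker η` (on X_i, equivalently in
   ℂ[X] since α_i ∈ Ker η) of ξ_i-degree 1: ξ_i a ≠ 0 and ξ_i² a = 0.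
Complete fields / Lie_alg(X) are as in the other files.
-/

noncomputable section

def IsCompleteField {A : Type*} [CommRing A] [Algebra ℂ A] (ξ : Derivation ℂ A A) : Prop :=
  ∀ p : A →ₐ[ℂ] ℂ, ∃ γ : ℂ → (A →ₐ[ℂ] ℂ), γ 0 = p ∧
    ∀ (a : A) (t : ℂ), HasDerivAt (fun s => (γ s) a) ((γ t) (ξ a)) t

def LieAlgGen (A : Type*) [CommRing A] [Algebra ℂ A] : LieSubalgebra ℂ (Derivation ℂ A A) :=
  LieSubalgebra.lieSpan ℂ (Derivation ℂ A A) {ξ | IsCompleteField ξ}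

/-- Semi-simple vector field: generator of an algebraic ℂ*-action, i.e. `ℂ[X]` is
spanned by eigenvectors of ξ with integer eigenvalues. -/
def IsSemisimpleField {A : Type*} [CommRing A] [Algebra ℂ A] (ξ : Derivation ℂ A A) : Prop :=
  Submodule.span ℂ {a : A | ∃ m : ℤ, ξ a = (m : ℂ) • a} = ⊤

/-- The pair (ξ, η) is semi-compatible on the principal open set {α ≠ 0}: the span of
(Ker ξ)·(Ker η) there contains a nonzero ideal (denominators cleared by powers of α). -/
def SemiCompatibleAway {A : Type*} [CommRing A] [Algebra ℂ A]
    (ξ η : Derivation ℂ A A) (α : A) : Prop :=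
  ∃ I : Ideal A, I ≠ ⊥ ∧ ∀ h ∈ I, ∃ (l : ℕ) (m : ℕ) (f g : Fin m → A),
    (∀ j, ξ (f j) = 0) ∧ (∀ j, η (g j) = 0) ∧ α ^ l * h = ∑ j, f j * g j

/-!
Complete fields lie in `LieAlgGen A`. A locally nilpotent `D` is complete, with the polynomial
flow `t ↦ p ∘ exp (t D)`; so is a semisimple `η`, whose flow is the `ℂ*`-action rescaling its
eigenvectors. If `D` is complete and `D (D b) = 0`, then `b • D` is complete: its flow is a time
change `t ↦ γ (u t)` of the flow `γ` of `D`, because `s ↦ γ s b = p b + s p (D b)` is affine.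

For `f ∈ Ker ξ`, `a, g ∈ Ker η` and `ξ (ξ a) = 0` the four fields in
`(f ξ(a) g) • η = ⁅f • ξ, (a g) • η⁆ - ⁅(a f) • ξ, g • η⁆` are of this kind, so
`ξ(a) · span((Ker ξ)(Ker η)) · η ⊆ LieAlgGen A`. Semi-compatibility on `X_i` puts
`α_i^l · I_i` into that span. The `α_i` have no common zero, so by the Nullstellensatz a
partition of unity `∑ s_i α_i^L = 1` in `ℂ[B] ⊆ Ker η` glues these inclusions, giving
`J = (∏ ξ_i(a_i)) · ∏ I_i`.
-/

open Polynomial Finset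
open scoped Nat

namespace Derivation

variable {R A : Type*} [CommRing R] [CommRing A] [Algebra R A]

theorem iterate_apply_mul (D : Derivation R A A) (n : ℕ) (a b : A) :
    D^[n] (a * b) = ∑ ij ∈ antidiagonal n, n.choose ij.1 • (D^[ij.1] a * D^[ij.2] b) := by
  induction n with
  | zero => simp
  | succ n ih =>
    rw [sum_antidiagonal_choose_succ_nsmul (M := A) (fun i j => D^[i] a * D^[j] b) n]
    simp only [Function.iterate_succ_apply', ih, map_sum, map_nsmul, leibniz, smul_eq_mul,
      nsmul_add, sum_add_distrib]
    congr 1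
    refine sum_congr rfl fun ij hij => ?_
    rw [n.choose_symm_of_eq_add (mem_antidiagonal.1 hij).symm]
    ring

theorem iterate_map_smul (D : Derivation R A A) (n : ℕ) (c : R) (a : A) :
    D^[n] (c • a) = c • D^[n] a := by
  induction n with
  | zero => rfl
  | succ n ih => rw [Function.iterate_succ_apply', ih, map_smul, Function.iterate_succ_apply']

end Derivation

section

variable {A : Type*} [CommRing A] [Algebra ℂ A]

lemma IsLND.exists_iterate_eq_zero {D : Derivation ℂ A A} (hD : IsLND D) (x : A) :
    ∃ N, ∀ n ≥ N, D^[n] x = 0 := by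
  obtain ⟨N, hN⟩ := hD x
  rw [Module.End.pow_apply, Derivation.coeFn_coe] at hN
  refine ⟨N, fun n hn => ?_⟩
  rw [← Nat.sub_add_cancel hn, Function.iterate_add_apply, hN, iterate_map_zero]

-- `t ↦ p (exp (t D) x)`, a polynomial because `D` is locally nilpotent
def orbitPoly (D : Derivation ℂ A A) (hD : IsLND D) (p : A →ₐ[ℂ] ℂ) (x : A) : ℂ[X] :=
  ⟨.ofCoeff (Finsupp.ofSupportFinite (fun n => p (D^[n] x) / n !) (by
    obtain ⟨N, hN⟩ := hD.exists_iterate_eq_zero x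
    refine (Set.finite_lt_nat N).subset fun n hn => ?_
    by_contra h
    exact hn (by simp [hN n (not_lt.mp h)])))⟩

section OrbitPoly

variable {D : Derivation ℂ A A} (hD : IsLND D) (p : A →ₐ[ℂ] ℂ)

@[simp]
lemma coeff_orbitPoly (x : A) (n : ℕ) : (orbitPoly D hD p x).coeff n = p (D^[n] x) / n ! := by
  simp [orbitPoly, Finsupp.ofSupportFinite_coe]

lemma orbitPoly_mul (x y : A) :
    orbitPoly D hD p (x * y) = orbitPoly D hD p x * orbitPoly D hD p y := by
  ext n
  rw [coeff_mul, coeff_orbitPoly, Derivation.iterate_apply_mul, map_sum, sum_div]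
  refine sum_congr rfl fun ⟨i, j⟩ hij => ?_
  obtain rfl : i + j = n := mem_antidiagonal.1 hij
  have hfac : ((i + j).choose i * i ! * j ! : ℂ) = (i + j)! := by
    rw [Nat.choose_symm_add]
    exact_mod_cast Nat.add_choose_mul_factorial_mul_factorial i j
  rw [map_nsmul, map_mul, nsmul_eq_mul, coeff_orbitPoly, coeff_orbitPoly]
  have hchoose : ((i + j).choose i : ℂ) ≠ 0 := by exact_mod_cast (Nat.choose_pos (by omega)).ne'
  rw [← hfac]
  field_simp

def orbitPolyHom : A →ₐ[ℂ] ℂ[X] :=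
  AlgHom.ofLinearMap
    { toFun := orbitPoly D hD p
      map_add' := fun x y => by ext n; simp [add_div]
      map_smul' := fun c x => by ext n; simp [Derivation.iterate_map_smul, mul_div_assoc] }
    (by ext n; cases n <;> simp [coeff_one])
    (orbitPoly_mul hD p)

lemma derivative_orbitPoly (x : A) : derivative (orbitPoly D hD p x) = orbitPoly D hD p (D x) := by
  ext n
  rw [coeff_derivative, coeff_orbitPoly, coeff_orbitPoly, Function.iterate_succ_apply,
    Nat.factorial_succ]
  push_cast
  field_simp

end OrbitPoly

theorem IsLND.isCompleteField {D : Derivation ℂ A A} (hD : IsLND D) : IsCompleteField D := by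
  intro p
  refine ⟨fun t => (aeval t).comp (orbitPolyHom hD p), ?_, fun x t => ?_⟩
  · ext x
    simp [orbitPolyHom, ← coeff_zero_eq_eval_zero]
  · simpa [orbitPolyHom, derivative_orbitPoly] using (orbitPoly D hD p x).hasDerivAt t

namespace Derivation

def IsIntegralCurve (D : Derivation ℂ A A) (γ : ℂ → A →ₐ[ℂ] ℂ) : Prop :=
  ∀ a t, HasDerivAt (fun s => γ s a) (γ t (D a)) t

variable {D : Derivation ℂ A A} {γ : ℂ → A →ₐ[ℂ] ℂ}

lemma IsIntegralCurve.apply_eq_of_apply_eq_zero (hγ : D.IsIntegralCurve γ) {b : A} (hb : D b = 0)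
    (t : ℂ) : γ t b = γ 0 b :=
  is_const_of_deriv_eq_zero (fun s => (hγ b s).differentiableAt)
    (fun s => by simpa [hb] using (hγ b s).deriv) t 0

lemma IsIntegralCurve.apply_eq_add_mul (hγ : D.IsIntegralCurve γ) {b : A} (hb : D (D b) = 0)
    (t : ℂ) : γ t b = γ 0 b + t * γ 0 (D b) := by
  have hderiv (s : ℂ) : HasDerivAt (fun s => γ s b - s * γ 0 (D b)) 0 s := by
    refine ((hγ b s).fun_sub ((hasDerivAt_id s).mul_const (γ 0 (D b)))).congr_deriv ?_
    rw [hγ.apply_eq_of_apply_eq_zero hb s, one_mul, sub_self]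
  have := is_const_of_deriv_eq_zero (fun s => (hderiv s).differentiableAt)
    (fun s => (hderiv s).deriv) t 0
  simp only [zero_mul, sub_zero] at this
  linear_combination this

lemma IsIntegralCurve.comp_smul (hγ : D.IsIntegralCurve γ) {b : A} {u : ℂ → ℂ}
    (hu : ∀ t, HasDerivAt u (γ (u t) b) t) : (b • D).IsIntegralCurve (γ ∘ u) := by
  intro x t
  refine ((hγ x (u t)).comp t (hu t)).congr_deriv ?_
  simp [mul_comm]

end Derivation

lemma exists_hasDerivAt_eq_add_mul (β c : ℂ) :
    ∃ u : ℂ → ℂ, u 0 = 0 ∧ ∀ t, HasDerivAt u (β + c * u t) t := by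
  rcases eq_or_ne c 0 with rfl | hc
  · exact ⟨fun t => β * t, by simp, fun t => by simpa using (hasDerivAt_id t).const_mul β⟩
  refine ⟨fun t => β / c * (Complex.exp (c * t) - 1), by simp, fun t => ?_⟩
  have h := (((hasDerivAt_id t).const_mul c).cexp.sub_const 1).const_mul (β / c)
  refine h.congr_deriv ?_
  simp only [id, mul_one]
  field_simp
  ring

lemma isCompleteField_iff {D : Derivation ℂ A A} :
    IsCompleteField D ↔ ∀ p, ∃ γ, γ 0 = p ∧ D.IsIntegralCurve γ := Iff.rfl

theorem IsCompleteField.smul_of_apply_apply_eq_zero {D : Derivation ℂ A A}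
    (hD : IsCompleteField D) {b : A} (hb : D (D b) = 0) : IsCompleteField (b • D) := by
  intro p
  obtain ⟨γ, rfl, hγ⟩ := isCompleteField_iff.mp hD p
  obtain ⟨u, hu0, hu⟩ := exists_hasDerivAt_eq_add_mul (γ 0 b) (γ 0 (D b))
  refine ⟨γ ∘ u, by simp [hu0], hγ.comp_smul fun t => ?_⟩
  rw [hγ.apply_eq_add_mul hb]
  simpa [mul_comm] using hu t

namespace IsSemisimpleField

variable {η : Derivation ℂ A A}

lemma apply_mul_eq_smul_of_apply_eq_smul {a b : A} {m n : ℤ} (ha : η a = (m : ℂ) • a)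
    (hb : η b = (n : ℂ) • b) : η (a * b) = ((m + n : ℤ) : ℂ) • (a * b) := by
  rw [Derivation.leibniz, ha, hb]
  simp only [smul_eq_mul, Algebra.smul_def, Int.cast_add, map_add]
  ring

lemma exists_linearMap_smul_on_eigenvectors (hη : IsSemisimpleField η) (f : ℤ → ℂ) :
    ∃ L : A →ₗ[ℂ] A, ∀ (m : ℤ) (a : A), η a = (m : ℂ) • a → L a = f m • a := by
  let V (m : ℤ) : Submodule ℂ A := Module.End.eigenspace η.toLinearMap m
  have hV (m : ℤ) (a : A) : a ∈ V m ↔ η a = (m : ℂ) • a := Module.End.mem_eigenspace_iff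
  have hint : DirectSum.IsInternal V := by
    refine DirectSum.isInternal_submodule_of_iSupIndep_of_iSup_eq_top
      ((Module.End.eigenspaces_iSupIndep _).comp Int.cast_injective) ?_
    rw [eq_top_iff, ← hη, Submodule.span_le]
    rintro a ⟨m, hm⟩
    exact Submodule.mem_iSup_of_mem m ((hV m a).2 hm)
  let e := LinearEquiv.ofBijective (DirectSum.coeLinearMap V) hint
  refine ⟨DirectSum.toModule ℂ ℤ A (fun m => f m • (V m).subtype) ∘ₗ e.symm, fun m a ha => ?_⟩
  have he : e.symm a = DirectSum.lof ℂ ℤ (fun m => V m) m ⟨a, (hV m a).2 ha⟩ :=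
    e.symm_apply_eq.mpr (DirectSum.coeLinearMap_of V m ⟨a, (hV m a).2 ha⟩).symm
  simp [he]

lemma exists_algHom_exp_smul_on_eigenvectors (hη : IsSemisimpleField η) (t : ℂ) :
    ∃ Φ : A →ₐ[ℂ] A, ∀ (m : ℤ) (a : A), η a = (m : ℂ) • a → Φ a = Complex.exp (t * m) • a := by
  obtain ⟨L, hL⟩ := hη.exists_linearMap_smul_on_eigenvectors fun m => Complex.exp (t * m)
  have hmul : (LinearMap.mul ℂ A).compr₂ L = (LinearMap.mul ℂ A).compl₁₂ L L := by
    refine LinearMap.ext_on hη fun a ⟨m, ha⟩ => LinearMap.ext_on hη fun b ⟨n, hb⟩ => ?_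
    simp only [LinearMap.compr₂_apply, LinearMap.compl₁₂_apply, LinearMap.mul_apply',
      hL _ _ (apply_mul_eq_smul_of_apply_eq_smul ha hb), hL _ _ ha, hL _ _ hb, smul_mul_smul_comm]
    push_cast
    rw [mul_add, Complex.exp_add]
  refine ⟨AlgHom.ofLinearMap L ?_ fun a b => congr($hmul a b), hL⟩
  simpa using hL 0 1 (by simp)

theorem isCompleteField (hη : IsSemisimpleField η) : IsCompleteField η := by
  choose Φ hΦ using hη.exists_algHom_exp_smul_on_eigenvectors
  intro p
  refine ⟨fun t => p.comp (Φ t), ?_, fun x t => ?_⟩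
  · refine AlgHom.toLinearMap_injective (LinearMap.ext_on hη ?_)
    rintro a ⟨m, ha⟩
    simp [hΦ 0 m a ha]
  · induction (hη ▸ Submodule.mem_top : x ∈ Submodule.span ℂ _) using Submodule.span_induction with
    | mem a ha =>
      obtain ⟨m, ha⟩ := ha
      simp only [AlgHom.comp_apply, hΦ _ m a ha, ha, map_smul, smul_eq_mul]
      exact ((((hasDerivAt_id t).mul_const (m : ℂ)).cexp).mul_const (p a)).congr_deriv (by
        simp only [id, one_mul]; ring)
    | zero => simpa using hasDerivAt_const t (0 : ℂ)
    | add x y _ _ hx hy =>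
      simp only [AlgHom.comp_apply, map_add] at hx hy ⊢
      exact hx.fun_add hy
    | smul c x _ hx =>
      simp only [AlgHom.comp_apply, map_smul, smul_eq_mul] at hx ⊢
      rw [η.map_smul, map_smul, map_smul, smul_eq_mul]
      exact hx.const_mul c

end IsSemisimpleField

lemma Derivation.mul_smul_eq_lie_sub_lie {R B : Type*} [CommRing R] [CommRing B] [Algebra R B]
    (ξ η : Derivation R B B) {a : B} (ha : η a = 0) (f g : B) :
    (f * ξ a * g) • η = ⁅f • ξ, (a * g) • η⁆ - ⁅(a * f) • ξ, g • η⁆ := by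
  ext x
  simp only [Derivation.sub_apply, Derivation.commutator_apply, Derivation.smul_apply,
    smul_eq_mul, Derivation.leibniz, ha, mul_zero, add_zero]
  ring

section LieAlgGen

variable {ξ η : Derivation ℂ A A} (hξ : IsCompleteField ξ) (hη : IsCompleteField η)
  {a : A} (ha : η a = 0) (ha' : ξ (ξ a) = 0)
include hξ hη ha ha'

lemma mul_smul_mem_lieAlgGen {f g : A} (hf : ξ f = 0) (hg : η g = 0) :
    (f * ξ a * g) • η ∈ LieAlgGen A := by
  have mem {D : Derivation ℂ A A} (hD : IsCompleteField D) {b : A} (hb : D (D b) = 0) :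
      b • D ∈ LieAlgGen A :=
    LieSubalgebra.subset_lieSpan (hD.smul_of_apply_apply_eq_zero hb)
  rw [ξ.mul_smul_eq_lie_sub_lie η ha]
  refine sub_mem (LieSubalgebra.lie_mem _ (mem hξ ?_) (mem hη ?_))
    (LieSubalgebra.lie_mem _ (mem hξ ?_) (mem hη ?_)) <;>
    simp [Derivation.leibniz, hf, hg, ha, ha']

lemma mul_sum_smul_mem_lieAlgGen {ι : Type*} [Fintype ι] {f g : ι → A} (hf : ∀ j, ξ (f j) = 0)
    (hg : ∀ j, η (g j) = 0) : (ξ a * ∑ j, f j * g j) • η ∈ LieAlgGen A := by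
  rw [mul_sum, sum_smul]
  refine sum_mem fun j _ => ?_
  rw [← mul_assoc, mul_comm (ξ a)]
  exact mul_smul_mem_lieAlgGen hξ hη ha ha' (hf j) (hg j)

end LieAlgGen

theorem exists_algHom_of_isMaximal {K B : Type*} [Field K] [IsAlgClosed K] [CommRing B]
    [Algebra K B] [Algebra.FiniteType K B] (m : Ideal B) [m.IsMaximal] :
    ∃ q : B →ₐ[K] K, ∀ r ∈ m, q r = 0 := by
  let := Ideal.Quotient.field m
  have := finite_of_finite_type_of_isJacobsonRing K (B ⧸ m)
  let e := AlgEquiv.ofBijective (Algebra.ofId K (B ⧸ m))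
    IsAlgClosed.algebraMap_bijective_of_isIntegral
  exact ⟨e.symm.toAlgHom.comp (Ideal.Quotient.mkₐ K m),
    fun r hr => by simp [Ideal.Quotient.eq_zero_iff_mem.mpr hr]⟩

theorem span_range_eq_top_of_not_exists_common_zero {K B ι : Type*} [Field K] [IsAlgClosed K]
    [CommRing B] [Algebra K B] [Algebra.FiniteType K B] {α : ι → B}
    (h : ¬ ∃ q : B →ₐ[K] K, ∀ i, q (α i) = 0) : Ideal.span (Set.range α) = ⊤ := by
  by_contra hne
  obtain ⟨m, hm, hle⟩ := Ideal.exists_le_maximal _ hne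
  obtain ⟨q, hq⟩ := exists_algHom_of_isMaximal (K := K) m
  exact h ⟨q, fun i => hq _ (hle (Ideal.subset_span ⟨i, rfl⟩))⟩

theorem AddSubmonoid.mem_of_span_eq_top_of_forall_mul_pow_mem {R B ι : Type*} [CommRing R]
    [Semiring B] [Fintype ι] (f : R →+* B) (M : AddSubmonoid B) {α : ι → R}
    (hα : Ideal.span (Set.range α) = ⊤) {x : B} (hx : ∀ i, ∃ l, ∀ s, f (s * α i ^ l) * x ∈ M) :
    x ∈ M := by
  choose l hl using hx
  set L := ∑ i, l i
  have hspan : Ideal.span (Set.range fun i => α i ^ L) = ⊤ := by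
    have := Ideal.span_pow_eq_top _ hα L
    rwa [← Set.range_comp] at this
  obtain ⟨s, hs⟩ := (Submodule.mem_span_range_iff_exists_fun R).mp (hspan ▸ Submodule.mem_top :
    (1 : R) ∈ Ideal.span (Set.range fun i => α i ^ L))
  have hL (i : ι) : α i ^ L = α i ^ (L - l i) * α i ^ l i := by
    rw [← pow_add, Nat.sub_add_cancel (single_le_sum (fun _ _ => Nat.zero_le _) (mem_univ i))]
  rw [← one_mul x, ← map_one f, ← hs, map_sum, sum_mul]
  refine M.sum_mem fun i _ => ?_
  simpa [hL, mul_assoc] using hl i (s i * α i ^ (L - l i))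

end

theorem statement12_general (A R : Type) [CommRing A] [IsDomain A] [Algebra ℂ A]
    [CommRing R] [Algebra ℂ R]
    (hfgR : Algebra.FiniteType ℂ R)
    (πs : R →ₐ[ℂ] A)
    (η : Derivation ℂ A A) (hη : IsLND η ∨ IsSemisimpleField η)
    (hηB : ∀ r : R, η (πs r) = 0)
    (k : ℕ) (α : Fin k → R)
    (hnocommonzero : ¬ ∃ q : R →ₐ[ℂ] ℂ, ∀ i, q (α i) = 0)
    (ξ : Fin k → Derivation ℂ A A) (hξLND : ∀ i, IsLND (ξ i))
    (hsemicompat : ∀ i, SemiCompatibleAway (ξ i) η (πs (α i)))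
    (hdegree1 : ∀ i, ∃ a : A, η a = 0 ∧ ξ i a ≠ 0 ∧ ξ i (ξ i a) = 0) :
    ∃ J : Ideal A, J ≠ ⊥ ∧ ∀ f ∈ J, (f • η : Derivation ℂ A A) ∈ LieAlgGen A := by
  have hηc : IsCompleteField η := hη.elim IsLND.isCompleteField IsSemisimpleField.isCompleteField
  choose a haη haξ haξξ using hdegree1
  choose I hI hIα using hsemicompat
  set c := ∏ i, ξ i (a i)
  refine ⟨Ideal.span {c} * ∏ i, I i, ?_, fun f hf => ?_⟩
  · rw [Ne, Ideal.mul_eq_bot, Ideal.span_singleton_eq_bot, not_or, ← Ideal.zero_eq_bot,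
      prod_eq_zero_iff, prod_eq_zero_iff]
    exact ⟨fun ⟨i, _, hi⟩ => haξ i hi, fun ⟨i, _, hi⟩ => hI i hi⟩
  obtain ⟨h, hh, rfl⟩ := Ideal.mem_span_singleton_mul.1 hf
  let M : AddSubmonoid A :=
    (LieAlgGen A).toSubmodule.toAddSubmonoid.comap ((smulAddHom A _).flip η)
  refine M.mem_of_span_eq_top_of_forall_mul_pow_mem πs.toRingHom
    (span_range_eq_top_of_not_exists_common_zero hnocommonzero) fun i => ?_
  obtain ⟨d, hd⟩ : ξ i (a i) ∣ c := dvd_prod_of_mem (fun i => ξ i (a i)) (mem_univ i)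
  obtain ⟨l, m, F, G, hF, hG, hFG⟩ :=
    hIα i (d * h) (Ideal.mul_mem_left _ _ ((Ideal.prod_le_inf.trans (inf_le (mem_univ i))) hh))
  refine ⟨l, fun s => ?_⟩
  have hfactor : πs (s * α i ^ l) * (c * h) = ξ i (a i) * ∑ j, F j * (πs s * G j) := by
    simp only [mul_left_comm _ (πs s), ← mul_sum, ← hFG, hd, map_mul, map_pow]
    ring
  show (πs (s * α i ^ l) * (c * h)) • η ∈ LieAlgGen A
  rw [hfactor]
  exact mul_sum_smul_mem_lieAlgGen (hξLND i).isCompleteField hηc (haη i) (haξξ i) (hF ·)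
    fun j => by simp [Derivation.leibniz, hηB, hG]

theorem statement12 (A R : Type) [CommRing A] [IsDomain A] [Algebra ℂ A]
    [CommRing R] [IsDomain R] [Algebra ℂ R]
    (hfgA : Algebra.FiniteType ℂ A) (hsmA : Algebra.FormallySmooth ℂ A)
    (hfgR : Algebra.FiniteType ℂ R) (hsmR : Algebra.FormallySmooth ℂ R)
    (πs : R →ₐ[ℂ] A)
    (hπsurj : ∀ q : R →ₐ[ℂ] ℂ, ∃ p : A →ₐ[ℂ] ℂ, p.comp πs = q)
    (η : Derivation ℂ A A) (hη : IsLND η ∨ IsSemisimpleField η)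
    (hηB : ∀ r : R, η (πs r) = 0)
    (k : ℕ) (α : Fin k → R)
    (hnocommonzero : ¬ ∃ q : R →ₐ[ℂ] ℂ, ∀ i, q (α i) = 0)
    (ξ : Fin k → Derivation ℂ A A) (hξLND : ∀ i, IsLND (ξ i))
    (hξα : ∀ i, ξ i (πs (α i)) = 0)
    (hsemicompat : ∀ i, SemiCompatibleAway (ξ i) η (πs (α i)))
    (hdegree1 : ∀ i, ∃ a : A, η a = 0 ∧ ξ i a ≠ 0 ∧ ξ i (ξ i a) = 0) :
    ∃ J : Ideal A, J ≠ ⊥ ∧ ∀ f ∈ J, (f • η : Derivation ℂ A A) ∈ LieAlgGen A :=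
  statement12_general A R hfgR πs η hη hηB k α hnocommonzero ξ hξLND hsemicompat hdegree1
end
end
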